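/- arXiv:1109.5342 — 4 statements merged into one kernel-verified Lean document; each statement's English description precedes it below -/
import Mathlib

section
/- Let Λ be a skew-symmetric m×m integer matrix, let B̃, R̃' be m×n integer matrices (n ≤ m), let Dₙ = diag(d₁,…,dₙ) with positive integer entries, and suppose Λ·(−B̃) equals the m×n matrix whose top n×n block is Dₙ and whose bottom (m−n)×n block is zero. Let Ĩ be the m×n matrix formed by the first n columns of the m×m identity matrix and let R' be the top n×n submatrix of R̃'. Then for all column vectors m̲, e̲ ∈ ℤⁿ one has Λ((Ĩ−R̃')m̲, B̃e̲) = −⟨e̲, m̲⟩, where Λ(u,v) := uᵗΛv for u,v ∈ ℤᵐ and ⟨e̲, m̲⟩ := e̲ᵗ·Dₙ(Iₙ−R')·m̲. -/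
open Matrix

/-- With Λ skew-symmetric m×m, B̃, R̃' m×n, Dₙ = diag d positive,
compatibility Λ·(−B̃) = [Dₙ; 0], Ĩ the first n columns of the identity and R'
the top n×n block of R̃', we have Λ((Ĩ−R̃')m̲, B̃e̲) = −⟨e̲, m̲⟩ where
Λ(u,v) = uᵗΛv and ⟨e̲,m̲⟩ = e̲ᵗ·Dₙ(Iₙ−R')·m̲. -/
theorem quantum_CC_lemma1_part1 (m n : ℕ) (hn : n ≤ m)
    (Λ : Matrix (Fin m) (Fin m) ℤ) (hskew : Λᵀ = -Λ)
    (Bt Rt' : Matrix (Fin m) (Fin n) ℤ)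
    (d : Fin n → ℤ) (hd : ∀ i, 0 < d i)
    (hcomp : Λ * (-Bt) = Matrix.of fun (i : Fin m) (j : Fin n) =>
      if h : (i : ℕ) < n then Matrix.diagonal d ⟨(i : ℕ), h⟩ j else 0)
    (It : Matrix (Fin m) (Fin n) ℤ)
    (hIt : It = (1 : Matrix (Fin m) (Fin m) ℤ).submatrix id (Fin.castLE hn))
    (R' : Matrix (Fin n) (Fin n) ℤ)
    (hR' : R' = Rt'.submatrix (Fin.castLE hn) id)
    (mvec evec : Matrix (Fin n) (Fin 1) ℤ) :
    ((((It - Rt') * mvec)ᵀ * Λ * (Bt * evec) : Matrix (Fin 1) (Fin 1) ℤ) 0 0) =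
      -((evecᵀ * (Matrix.diagonal d * (1 - R')) * mvec :
          Matrix (Fin 1) (Fin 1) ℤ) 0 0) := by
  -- The compatibility matrix equals It * diagonal d
  have hM : (Matrix.of fun (i : Fin m) (j : Fin n) =>
      if h : (i : ℕ) < n then Matrix.diagonal d ⟨(i : ℕ), h⟩ j else 0)
      = It * Matrix.diagonal d := by
    ext i j
    simp only [Matrix.of_apply, Matrix.mul_apply, hIt, Matrix.submatrix_apply,
      Matrix.one_apply, Matrix.diagonal_apply, id_eq]
    by_cases h : (i : ℕ) < n
    · rw [Finset.sum_eq_single (⟨(i : ℕ), h⟩ : Fin n)]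
      · have : i = Fin.castLE hn ⟨(i : ℕ), h⟩ := by
          apply Fin.ext; rfl
        simp [h, ← this]
      · intro b _ hb
        have : i ≠ Fin.castLE hn b := by
          intro hc
          apply hb
          apply Fin.ext
          simp [hc]
        simp [this]
      · simp
    · rw [Finset.sum_eq_zero]
      · simp [h]
      · intro b _
        have : i ≠ Fin.castLE hn b := by
          intro hc
          apply h
          rw [hc]
          exact b.isLt
        simp [this]
  have hΛB : Λ * Bt = -(It * Matrix.diagonal d) := by
    rw [← hM, ← hcomp]
    simp [Matrix.mul_neg]
  have hItIt : Itᵀ * It = (1 : Matrix (Fin n) (Fin n) ℤ) := by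
    ext i j
    simp only [Matrix.mul_apply, hIt, Matrix.transpose_apply, Matrix.submatrix_apply,
      Matrix.one_apply, id_eq]
    rw [Finset.sum_eq_single (Fin.castLE hn i)]
    · simp [Fin.castLE_inj, eq_comm]
    · intro b _ hb
      rw [if_neg hb, zero_mul]
    · simp
  have hRtIt : Rt'ᵀ * It = R'ᵀ := by
    ext i j
    simp only [Matrix.mul_apply, hIt, hR', Matrix.transpose_apply, Matrix.submatrix_apply,
      Matrix.one_apply, id_eq]
    rw [Finset.sum_eq_single (Fin.castLE hn j)]
    · simp
    · intro b _ hb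
      rw [if_neg hb, mul_zero]
    · simp
  have h2 : (Itᵀ - Rt'ᵀ) * (Λ * Bt) = -((1 - R'ᵀ) * Matrix.diagonal d) := by
    rw [hΛB, Matrix.mul_neg, Matrix.sub_mul, ← Matrix.mul_assoc, ← Matrix.mul_assoc,
      hItIt, hRtIt, Matrix.one_mul]
    rw [Matrix.sub_mul, Matrix.one_mul]
  have key : (((It - Rt') * mvec)ᵀ * Λ * (Bt * evec) : Matrix (Fin 1) (Fin 1) ℤ)
      = -(mvecᵀ * ((1 - R'ᵀ) * Matrix.diagonal d) * evec) := by
    rw [Matrix.transpose_mul, Matrix.transpose_sub]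
    have hassoc : mvecᵀ * (Itᵀ - Rt'ᵀ) * Λ * (Bt * evec)
        = mvecᵀ * ((Itᵀ - Rt'ᵀ) * (Λ * Bt)) * evec := by
      rw [Matrix.mul_assoc (mvecᵀ * (Itᵀ - Rt'ᵀ)) Λ, ← Matrix.mul_assoc Λ Bt, Matrix.mul_assoc,
        ← Matrix.mul_assoc (Itᵀ - Rt'ᵀ), Matrix.mul_assoc mvecᵀ]
    rw [hassoc, h2, Matrix.mul_neg, Matrix.neg_mul]
  have htr : (mvecᵀ * ((1 - R'ᵀ) * Matrix.diagonal d) * evec)ᵀ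
      = evecᵀ * (Matrix.diagonal d * (1 - R')) * mvec := by
    simp [Matrix.transpose_mul, Matrix.transpose_sub, Matrix.mul_assoc]
  have hfin : ((evecᵀ * (Matrix.diagonal d * (1 - R')) * mvec : Matrix (Fin 1) (Fin 1) ℤ)) 0 0
      = ((mvecᵀ * ((1 - R'ᵀ) * Matrix.diagonal d) * evec : Matrix (Fin 1) (Fin 1) ℤ)) 0 0 := by
    rw [← htr]; rfl
  rw [key]
  simp only [Matrix.neg_apply]
  exact congrArg Neg.neg hfin.symm
end

section
/- Let Λ be a skew-symmetric m×m integer matrix, let B̃, R̃, R̃' be m×n integer matrices (n ≤ m) with B̃ = R̃' − R̃, let Dₙ = diag(d₁,…,dₙ) with positive integer entries, and suppose Λ·(−B̃) equals the m×n matrix whose top n×n block is Dₙ and whose bottom (m−n)×n block is zero. Let B, R, R' denote the top n×n submatrices of B̃, R̃, R̃' (so B = R' − R), and assume the symmetrization relation (Iₙ − Rᵗ)Dₙ = Dₙ(Iₙ − R'). Then for all column vectors e̲, f̲ ∈ ℤⁿ one has Λ(B̃e̲, B̃f̲) = ⟨f̲, e̲⟩ − ⟨e̲, f̲⟩, where Λ(u,v)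 := uᵗΛv for u,v ∈ ℤᵐ and ⟨e̲, f̲⟩ := e̲ᵗ·Dₙ(Iₙ−R')·f̲. -/
open Matrix

/-- With Λ skew-symmetric, B̃ = R̃' − R̃, compatibility
Λ·(−B̃) = [Dₙ; 0] and symmetrization (Iₙ − Rᵗ)Dₙ = Dₙ(Iₙ − R'),
we have Λ(B̃e̲, B̃f̲) = ⟨f̲, e̲⟩ − ⟨e̲, f̲⟩. -/
theorem quantum_CC_lemma1_part2 (m n : ℕ) (hn : n ≤ m)
    (Λ : Matrix (Fin m) (Fin m) ℤ) (hskew : Λᵀ = -Λ)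
    (Bt Rt Rt' : Matrix (Fin m) (Fin n) ℤ) (hBt : Bt = Rt' - Rt)
    (d : Fin n → ℤ) (hd : ∀ i, 0 < d i)
    (hcomp : Λ * (-Bt) = Matrix.of fun (i : Fin m) (j : Fin n) =>
      if h : (i : ℕ) < n then Matrix.diagonal d ⟨(i : ℕ), h⟩ j else 0)
    (B R R' : Matrix (Fin n) (Fin n) ℤ)
    (hB : B = Bt.submatrix (Fin.castLE hn) id)
    (hR : R = Rt.submatrix (Fin.castLE hn) id)
    (hR' : R' = Rt'.submatrix (Fin.castLE hn) id)
    (hsym : (1 - Rᵀ) * Matrix.diagonal d = Matrix.diagonal d * (1 - R'))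
    (evec fvec : Matrix (Fin n) (Fin 1) ℤ) :
    (((Bt * evec)ᵀ * Λ * (Bt * fvec) : Matrix (Fin 1) (Fin 1) ℤ) 0 0) =
      ((fvecᵀ * (Matrix.diagonal d * (1 - R')) * evec :
          Matrix (Fin 1) (Fin 1) ℤ) 0 0) -
        ((evecᵀ * (Matrix.diagonal d * (1 - R')) * fvec :
          Matrix (Fin 1) (Fin 1) ℤ) 0 0) := by
  set M : Matrix (Fin m) (Fin n) ℤ := Matrix.of fun (i : Fin m) (j : Fin n) =>
      if h : (i : ℕ) < n then Matrix.diagonal d ⟨(i : ℕ), h⟩ j else 0 with hM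
  have hLB : Λ * Bt = -M := by
    have := hcomp
    rw [Matrix.mul_neg] at this
    linear_combination (norm := noncomm_ring) -this
  -- key: Btᵀ * M = Bᵀ * diagonal d
  have hBtM : Btᵀ * M = Bᵀ * Matrix.diagonal d := by
    ext k j
    rw [Matrix.mul_apply, Matrix.mul_apply]
    have hsub : ∑ i : Fin m, Btᵀ k i * M i j
        = ∑ i ∈ Finset.univ.map (Fin.castLEEmb hn), Btᵀ k i * M i j := by
      refine (Finset.sum_subset (Finset.subset_univ _) ?_).symm
      intro i _ hi
      have : ¬ ((i : ℕ) < n) := by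
        intro h
        exact hi (Finset.mem_map.mpr ⟨⟨(i : ℕ), h⟩, Finset.mem_univ _, Fin.ext rfl⟩)
      simp [hM, this]
    rw [hsub, Finset.sum_map]
    refine Finset.sum_congr rfl fun i _ => ?_
    have hlt : ((Fin.castLEEmb hn i : Fin m) : ℕ) < n := i.isLt
    simp only [hM, Matrix.of_apply, hlt, dif_pos, Matrix.transpose_apply, hB,
      Matrix.submatrix_apply, id_eq, Fin.castLEEmb_apply]
    rw [dif_pos (show ((Fin.castLE hn i : Fin m) : ℕ) < n from i.isLt)]
    rfl
  have hkey : Btᵀ * (Λ * Bt) = -(Bᵀ * Matrix.diagonal d) := by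
    rw [hLB, Matrix.mul_neg, hBtM]
  have hBmat : B = R' - R := by
    ext i k
    simp [hB, hR, hR', hBt, Matrix.sub_apply]
  have hid : (1 - R'ᵀ) * Matrix.diagonal d - Matrix.diagonal d * (1 - R')
      = -(Bᵀ * Matrix.diagonal d) := by
    rw [← hsym, hBmat, Matrix.transpose_sub]
    noncomm_ring
  have hLHS : (Bt * evec)ᵀ * Λ * (Bt * fvec)
      = evecᵀ * (-(Bᵀ * Matrix.diagonal d)) * fvec := by
    rw [Matrix.transpose_mul, ← hkey]; simp only [Matrix.mul_assoc]
  have hRHS1 : ((fvecᵀ * (Matrix.diagonal d * (1 - R')) * evec : Matrix (Fin 1) (Fin 1) ℤ)) 0 0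
      = ((evecᵀ * ((1 - R'ᵀ) * Matrix.diagonal d) * fvec : Matrix (Fin 1) (Fin 1) ℤ)) 0 0 := by
    have : (evecᵀ * ((1 - R'ᵀ) * Matrix.diagonal d) * fvec : Matrix (Fin 1) (Fin 1) ℤ)
        = (fvecᵀ * (Matrix.diagonal d * (1 - R')) * evec)ᵀ := by
      simp [Matrix.transpose_mul, Matrix.transpose_sub, Matrix.diagonal_transpose,
        Matrix.mul_assoc]
    rw [this, Matrix.transpose_apply]
  rw [hLHS, hRHS1, ← Matrix.sub_apply, ← Matrix.sub_mul, ← Matrix.mul_sub, hid]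
end

section
/- Let Λ be a skew-symmetric m×m integer matrix, let B̃, R̃, R̃' be m×n integer matrices (n ≤ m) with B̃ = R̃' − R̃, let Dₙ = diag(d₁,…,dₙ) with positive integer entries, and suppose Λ·(−B̃) equals the m×n matrix whose top n×n block is Dₙ and whose bottom (m−n)×n block is zero. Let Ĩ be the m×n matrix formed by the first n columns of the m×m identity, let B, R, R' be the top n×n submatrices of B̃, R̃, R̃', and assume (Iₙ − Rᵗ)Dₙ = Dₙ(Iₙ − R'). Then for all column vectors m̲, l̲, e̲, f̲ ∈ ℤⁿ: Λ(−B̃e̲ − (Ĩ−R̃')m̲, −B̃f̲ − (Ĩ−R̃')l̲) = Λ((Ĩ−R̃')m̲, (Ĩ−R̃')l̲) + ⟨f̲, e̲⟩ − ⟨e̲, f̲⟩ + ⟨e̲, l̲⟩ − ⟨f̲, m̲⟩, where Λ(u,v) := uᵗΛv for u,v ∈ ℤᵐ and ⟨e̲, f̲⟩ := e̲ᵗ·Dₙ(Iₙ−R')·f̲. -/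
open Matrix

/-- Under the compatibility and symmetrization hypotheses,
Λ(−B̃e̲ − (Ĩ−R̃')m̲, −B̃f̲ − (Ĩ−R̃')l̲)
  = Λ((Ĩ−R̃')m̲, (Ĩ−R̃')l̲) + ⟨f̲,e̲⟩ − ⟨e̲,f̲⟩ + ⟨e̲,l̲⟩ − ⟨f̲,m̲⟩. -/
theorem quantum_CC_corollary (m n : ℕ) (hn : n ≤ m)
    (Λ : Matrix (Fin m) (Fin m) ℤ) (hskew : Λᵀ = -Λ)
    (Bt Rt Rt' : Matrix (Fin m) (Fin n) ℤ) (hBt : Bt = Rt' - Rt)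
    (d : Fin n → ℤ) (hd : ∀ i, 0 < d i)
    (hcomp : Λ * (-Bt) = Matrix.of fun (i : Fin m) (j : Fin n) =>
      if h : (i : ℕ) < n then Matrix.diagonal d ⟨(i : ℕ), h⟩ j else 0)
    (It : Matrix (Fin m) (Fin n) ℤ)
    (hIt : It = (1 : Matrix (Fin m) (Fin m) ℤ).submatrix id (Fin.castLE hn))
    (B R R' : Matrix (Fin n) (Fin n) ℤ)
    (hB : B = Bt.submatrix (Fin.castLE hn) id)
    (hR : R = Rt.submatrix (Fin.castLE hn) id)
    (hR' : R' = Rt'.submatrix (Fin.castLE hn) id)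
    (hsym : (1 - Rᵀ) * Matrix.diagonal d = Matrix.diagonal d * (1 - R'))
    (mvec lvec evec fvec : Matrix (Fin n) (Fin 1) ℤ) :
    (((-(Bt * evec) - (It - Rt') * mvec)ᵀ * Λ *
        (-(Bt * fvec) - (It - Rt') * lvec) : Matrix (Fin 1) (Fin 1) ℤ) 0 0) =
      ((((It - Rt') * mvec)ᵀ * Λ * ((It - Rt') * lvec) :
          Matrix (Fin 1) (Fin 1) ℤ) 0 0) +
        ((fvecᵀ * (Matrix.diagonal d * (1 - R')) * evec :
          Matrix (Fin 1) (Fin 1) ℤ) 0 0) -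
        ((evecᵀ * (Matrix.diagonal d * (1 - R')) * fvec :
          Matrix (Fin 1) (Fin 1) ℤ) 0 0) +
        ((evecᵀ * (Matrix.diagonal d * (1 - R')) * lvec :
          Matrix (Fin 1) (Fin 1) ℤ) 0 0) -
        ((fvecᵀ * (Matrix.diagonal d * (1 - R')) * mvec :
          Matrix (Fin 1) (Fin 1) ℤ) 0 0) := by
  set D : Matrix (Fin n) (Fin n) ℤ := Matrix.diagonal d with hD
  set C : Matrix (Fin m) (Fin n) ℤ := Matrix.of fun (i : Fin m) (j : Fin n) =>
      if h : (i : ℕ) < n then Matrix.diagonal d ⟨(i : ℕ), h⟩ j else 0 with hCdef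
  set W : Matrix (Fin m) (Fin n) ℤ := It - Rt' with hW
  -- Cᵀ * M = D * top-block(M)
  have htop : ∀ M : Matrix (Fin m) (Fin n) ℤ,
      Cᵀ * M = D * (M.submatrix (Fin.castLE hn) id) := by
    intro M
    ext i j
    rw [Matrix.mul_apply, Matrix.mul_apply]
    rw [Finset.sum_eq_single (Fin.castLE hn i)]
    · rw [Finset.sum_eq_single i]
      · simp [hCdef, hD, Matrix.diagonal]
      · intro b _ hb
        simp [hD, Matrix.diagonal_apply_ne' d hb]
      · simp
    · intro b _ hb
      simp only [Matrix.transpose_apply, hCdef, Matrix.of_apply]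
      by_cases h : (b : ℕ) < n
      · rw [dif_pos h]
        have hne : (⟨(b : ℕ), h⟩ : Fin n) ≠ i := by
          intro hc
          apply hb
          apply Fin.ext
          simpa using congrArg Fin.val hc
        rw [Matrix.diagonal_apply_ne d hne, zero_mul]
      · rw [dif_neg h, zero_mul]
    · simp
  have hBtΛ : Btᵀ * Λ = Cᵀ := by
    have h := congrArg Matrix.transpose hcomp
    rw [Matrix.transpose_mul, Matrix.transpose_neg, hskew] at h
    simpa using h
  have hΛBt : Λ * Bt = -C := by
    have h : -(Λ * Bt) = C := by rw [← Matrix.mul_neg]; exact hcomp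
    exact neg_eq_iff_eq_neg.mp h
  have hItTop : It.submatrix (Fin.castLE hn) id = 1 := by
    subst hIt
    ext i j
    simp [Matrix.one_apply, Fin.castLE_inj, Fin.ext_iff]
  have hCtW : Cᵀ * W = D * (1 - R') := by
    rw [hW, Matrix.mul_sub, htop, htop, hItTop, ← hR', ← Matrix.mul_sub]
  have hCtBt : Cᵀ * Bt = D * B := by rw [htop, ← hB]
  -- symmetrization consequence: R'ᵀ * D = D * R
  have hsym' : R'ᵀ * D = D * R := by
    have h := congrArg Matrix.transpose hsym
    rw [Matrix.transpose_mul, Matrix.transpose_mul, Matrix.transpose_sub,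
      Matrix.transpose_sub, Matrix.transpose_one, Matrix.transpose_transpose,
      Matrix.diagonal_transpose, ← hD] at h
    -- h : D * (1 - R) = (1 - R'ᵀ) * D
    rw [Matrix.mul_sub, Matrix.sub_mul, Matrix.mul_one, Matrix.one_mul] at h
    have := congrArg (fun X => D - X) h
    simpa using this.symm
  have hDB : D * B = (D * (1 - R'))ᵀ - D * (1 - R') := by
    have hBRR : B = R' - R := by
      ext i j
      simp [hB, hBt, hR, hR', Matrix.sub_apply]
    rw [hBRR, Matrix.transpose_mul, Matrix.diagonal_transpose, ← hD,
      Matrix.transpose_sub, Matrix.transpose_one, Matrix.sub_mul, Matrix.one_mul,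
      Matrix.mul_sub, Matrix.mul_sub, Matrix.mul_one, hsym']
    abel
  -- the three bilinear evaluations
  have pair : ∀ (X Y : Matrix (Fin m) (Fin n) ℤ) (u v : Matrix (Fin n) (Fin 1) ℤ),
      (X * u)ᵀ * Λ * (Y * v) = uᵀ * (Xᵀ * Λ * Y) * v := by
    intro X Y u v
    simp only [Matrix.transpose_mul, Matrix.mul_assoc]
  have h1 : ∀ u v : Matrix (Fin n) (Fin 1) ℤ,
      (Bt * u)ᵀ * Λ * (Bt * v) = uᵀ * (D * B) * v := by
    intro u v
    rw [pair, hBtΛ, hCtBt]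
  have h2 : ∀ u v : Matrix (Fin n) (Fin 1) ℤ,
      (Bt * u)ᵀ * Λ * (W * v) = uᵀ * (D * (1 - R')) * v := by
    intro u v
    rw [pair, hBtΛ, hCtW]
  have h3 : ∀ u v : Matrix (Fin n) (Fin 1) ℤ,
      (W * u)ᵀ * Λ * (Bt * v) = -(uᵀ * (D * (1 - R'))ᵀ * v) := by
    intro u v
    have hWC : Wᵀ * C = (D * (1 - R'))ᵀ := by
      rw [← hCtW, Matrix.transpose_mul, Matrix.transpose_transpose]
    rw [pair, Matrix.mul_assoc Wᵀ, hΛBt, Matrix.mul_neg, hWC, Matrix.mul_neg,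
      Matrix.neg_mul]
  -- main matrix identity
  have main : (-(Bt * evec) - W * mvec)ᵀ * Λ * (-(Bt * fvec) - W * lvec)
      = (W * mvec)ᵀ * Λ * (W * lvec) + evecᵀ * (D * B) * fvec
        + evecᵀ * (D * (1 - R')) * lvec - mvecᵀ * (D * (1 - R'))ᵀ * fvec := by
    have e1 : (-(Bt * evec) - W * mvec) = -((Bt * evec) + W * mvec) := by abel
    have e2 : (-(Bt * fvec) - W * lvec) = -((Bt * fvec) + W * lvec) := by abel
    rw [e1, e2, Matrix.transpose_neg, Matrix.neg_mul, Matrix.neg_mul,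
      Matrix.mul_neg, neg_neg, Matrix.transpose_add, Matrix.add_mul,
      Matrix.add_mul]
    simp only [Matrix.mul_add]
    rw [h1, h2, h3]
    abel
  rw [main]
  -- convert entries
  have swap : ∀ (M : Matrix (Fin n) (Fin n) ℤ) (u v : Matrix (Fin n) (Fin 1) ℤ),
      (uᵀ * M * v) 0 0 = (vᵀ * Mᵀ * u) 0 0 := by
    intro M u v
    have h : (uᵀ * M * v)ᵀ = vᵀ * Mᵀ * u := by
      rw [Matrix.transpose_mul, Matrix.transpose_mul, Matrix.transpose_transpose,
        Matrix.mul_assoc]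
    rw [← h]
    rfl
  have hDBentry : ((evecᵀ * (D * B) * fvec : Matrix (Fin 1) (Fin 1) ℤ)) 0 0
      = ((evecᵀ * (D * (1 - R'))ᵀ * fvec : Matrix (Fin 1) (Fin 1) ℤ)) 0 0
        - ((evecᵀ * (D * (1 - R')) * fvec : Matrix (Fin 1) (Fin 1) ℤ)) 0 0 := by
    rw [hDB, Matrix.mul_sub, Matrix.sub_mul]
    simp only [Matrix.sub_apply]
  simp only [Matrix.add_apply, Matrix.sub_apply]
  rw [hDBentry, swap (D * (1 - R')) fvec evec, swap (D * (1 - R')) fvec mvec]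
  ring
end

section
/- Let Λ be a skew-symmetric m×m integer matrix, let B̃, R̃' be m×n integer matrices (n ≤ m), let Dₙ = diag(d₁,…,dₙ) with positive integer entries, and suppose Λ·(−B̃) equals the m×n matrix whose top n×n block is Dₙ and whose bottom (m−n)×n block is zero. Let Ĩ be the m×n matrix formed by the first n columns of the m×m identity and let R' be the top n×n submatrix of R̃'. Then for all column vectors h̲, l̲ ∈ ℤⁿ one has Λ(B̃h̲, (Ĩ−R̃')l̲) = ⟨h̲, l̲⟩, where Λ(u,v) := uᵗΛv for u,v ∈ ℤᵐ and ⟨h̲, l̲⟩ := h̲ᵗ·Dₙ(Iₙ−R')·l̲. -/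
open Matrix

/-- Under compatibility Λ·(−B̃) = [Dₙ; 0],
Λ(B̃h̲, (Ĩ−R̃')l̲) = ⟨h̲, l̲⟩ where ⟨h̲,l̲⟩ = h̲ᵗ·Dₙ(Iₙ−R')·l̲. -/
theorem quantum_CC_pairing (m n : ℕ) (hn : n ≤ m)
    (Λ : Matrix (Fin m) (Fin m) ℤ) (hskew : Λᵀ = -Λ)
    (Bt Rt' : Matrix (Fin m) (Fin n) ℤ)
    (d : Fin n → ℤ) (hd : ∀ i, 0 < d i)
    (hcomp : Λ * (-Bt) = Matrix.of fun (i : Fin m) (j : Fin n) =>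
      if h : (i : ℕ) < n then Matrix.diagonal d ⟨(i : ℕ), h⟩ j else 0)
    (It : Matrix (Fin m) (Fin n) ℤ)
    (hIt : It = (1 : Matrix (Fin m) (Fin m) ℤ).submatrix id (Fin.castLE hn))
    (R' : Matrix (Fin n) (Fin n) ℤ)
    (hR' : R' = Rt'.submatrix (Fin.castLE hn) id)
    (hvec lvec : Matrix (Fin n) (Fin 1) ℤ) :
    (((Bt * hvec)ᵀ * Λ * ((It - Rt') * lvec) : Matrix (Fin 1) (Fin 1) ℤ) 0 0) =
      ((hvecᵀ * (Matrix.diagonal d * (1 - R')) * lvec :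
        Matrix (Fin 1) (Fin 1) ℤ) 0 0) := by
  have h1 : Btᵀ * Λ = (Λ * (-Bt))ᵀ := by
    rw [Matrix.transpose_mul, Matrix.transpose_neg, hskew]
    simp [Matrix.neg_mul]
  have key : Btᵀ * Λ * (It - Rt') = Matrix.diagonal d * (1 - R') := by
    rw [h1, hcomp, Matrix.mul_sub, Matrix.mul_sub, Matrix.mul_one]
    congr 1
    · ext i j
      rw [hIt]
      simp only [Matrix.mul_apply, Matrix.transpose_apply, Matrix.of_apply,
        Matrix.submatrix_apply, id]
      rw [Finset.sum_eq_single (Fin.castLE hn i)]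
      · simp [Matrix.one_apply, Matrix.diagonal_apply, Fin.ext_iff, eq_comm]
      · intro k _ hk
        by_cases h : (k : ℕ) < n
        · have : (⟨(k : ℕ), h⟩ : Fin n) ≠ i := by
            intro he
            apply hk
            ext
            simpa [Fin.ext_iff] using he
          simp [h, Matrix.diagonal_apply_ne _ this]
        · simp [h]
      · simp
    · ext i j
      rw [hR']
      simp only [Matrix.mul_apply, Matrix.transpose_apply, Matrix.of_apply,
        Matrix.submatrix_apply, id]
      rw [Finset.sum_eq_single (Fin.castLE hn i)]
      · simp [Matrix.diagonal_mul, Fin.eta, i.isLt]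
        rw [Finset.sum_eq_single i]
        · simp
        · intro x _ hx
          simp [Matrix.diagonal_apply_ne' d hx]
        · simp
      · intro k _ hk
        by_cases h : (k : ℕ) < n
        · have : (⟨(k : ℕ), h⟩ : Fin n) ≠ i := by
            intro he
            apply hk
            ext
            simpa [Fin.ext_iff] using he
          simp [h, Matrix.diagonal_apply_ne _ this]
        · simp [h]
      · simp
  have : (Bt * hvec)ᵀ * Λ * ((It - Rt') * lvec)
      = hvecᵀ * (Matrix.diagonal d * (1 - R')) * lvec := by
    rw [Matrix.transpose_mul, ← key]
    simp only [Matrix.mul_assoc]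
  rw [this]
end
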